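/- arXiv:0707.2125 — 3 statements merged into one kernel-verified Lean document; each statement's English description precedes it below -/
import Mathlib

section
/- Let g : (−1,1) → ℂ be a C^∞ function which is odd, i.e. g(−x) = −g(x) for all x ∈ (−1,1). Then there exists a C^∞ function u : [0,1) → ℂ such that g(x) = x·u(x²) for all x ∈ (−1,1). -/
/-!
Let `k` be odd and `f` odd, smooth, and vanishing to order `k` at `0`. By Taylor's theorem
`sqrtQuot k f t = f(√t) / √t ^ k` tends to `f⁽ᵏ⁾(0) / k!` as `t → 0⁺`, so it is continuous on
`[0,1)`. For `t > 0` its derivative is `½ sqrtQuot (k + 2) (eulerOp k f) t` with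
`eulerOp k f = x f' - k f`, which is again odd and vanishes to order `k + 2`: its `j`-th derivative
at `0` is `(j - k) f⁽ʲ⁾(0)`, and `f⁽ᵏ⁺¹⁾(0) = 0` by parity. Hence the derivative extends
continuously to `0`, so the formula holds on all of `[0,1)`, and induction on the order of
smoothness shows that every `sqrtQuot k f` is smooth. The factor is `u = sqrtQuot 1 g`.
-/

open Complex Set

noncomputable section

open Filter Metric
open scoped Topology Nat ContDiff

section

variable {E : Type*} [NormedAddCommGroup E] [NormedSpace ℝ E]

theorem tendsto_inv_pow_smul_of_iteratedDeriv_eq_zero {f : ℝ → E} {a : ℝ} {k : ℕ}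
    (hf : ContDiffAt ℝ k f a) (hvan : ∀ j < k, iteratedDeriv j f a = 0) :
    Tendsto (fun x => ((x - a) ^ k)⁻¹ • f x) (𝓝[≠] a)
      (𝓝 ((k ! : ℝ)⁻¹ • iteratedDeriv k f a)) := by
  obtain ⟨u, hu, hfu⟩ := hf.contDiffOn le_rfl (by simp)
  obtain ⟨ε, hε, hball⟩ := Metric.mem_nhds_iff.1 hu
  have ha : a ∈ ball a ε := mem_ball_self hε
  have htaylor : ∀ x, taylorWithinEval f k (ball a ε) a x =
      ((k ! : ℝ)⁻¹ * (x - a) ^ k) • iteratedDeriv k f a := by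
    intro x
    rw [taylor_within_apply, Finset.sum_range_succ, Finset.sum_eq_zero, zero_add,
      iteratedDerivWithin_of_isOpen isOpen_ball ha]
    intro j hj
    rw [iteratedDerivWithin_of_isOpen isOpen_ball ha, hvan j (Finset.mem_range.1 hj), smul_zero]
  have h := taylor_tendsto (convex_ball a ε) ha (hfu.mono hball)
  rw [isOpen_ball.nhdsWithin_eq ha] at h
  have hlim := (h.mono_left (nhdsWithin_le_nhds (s := {a}ᶜ))).add_const
    ((k ! : ℝ)⁻¹ • iteratedDeriv k f a)
  rw [zero_add] at hlim
  refine hlim.congr' ?_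
  filter_upwards [self_mem_nhdsWithin] with x hx
  have hxa : (x - a) ^ k ≠ 0 := pow_ne_zero _ (sub_ne_zero.2 hx)
  rw [htaylor, smul_sub, smul_smul, mul_left_comm, inv_mul_cancel₀ hxa, mul_one, sub_add_cancel]

theorem iteratedDeriv_eq_zero_of_odd {f : ℝ → E}
    (hodd : (fun x => f (-x)) =ᶠ[𝓝 0] fun x => -f x) {j : ℕ} (hj : Even j) :
    iteratedDeriv j f 0 = 0 := by
  have h := (hodd.iteratedDeriv j).eq_of_nhds
  rw [iteratedDeriv_comp_neg, iteratedDeriv_fun_neg, neg_zero, hj.neg_one_pow, one_smul] at h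
  have h2 : (2 : ℝ) • iteratedDeriv j f 0 = 0 := by
    rw [two_smul]
    nth_rewrite 2 [h]
    exact add_neg_cancel _
  exact (smul_eq_zero.mp h2).resolve_left two_ne_zero

theorem deriv_neg_eq_of_odd {f : ℝ → E} {s : Set ℝ} (hs : IsOpen s)
    (hodd : ∀ x ∈ s, f (-x) = -f x) {x : ℝ} (hx : x ∈ s) : deriv f (-x) = deriv f x := by
  have h := (eventuallyEq_of_mem (hs.mem_nhds hx) hodd).deriv_eq
  rwa [deriv_comp_neg, deriv.fun_neg, neg_inj] at h

theorem ContDiffOn.differentiableOn_iteratedDeriv_of_isOpen {f : ℝ → E} {s : Set ℝ}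
    (hf : ContDiffOn ℝ ∞ f s) (hs : IsOpen s) (j : ℕ) :
    DifferentiableOn ℝ (iteratedDeriv j f) s :=
  (hf.differentiableOn_iteratedDerivWithin (mod_cast ENat.natCast_lt_top j)
    hs.uniqueDiffOn).congr (iteratedDerivWithin_of_isOpen hs).symm

def eulerOp (k : ℕ) (f : ℝ → E) (x : ℝ) : E := x • deriv f x - (k : ℝ) • f x

theorem contDiffOn_eulerOp {f : ℝ → E} {s : Set ℝ} (hs : IsOpen s) (hf : ContDiffOn ℝ ∞ f s)
    (k : ℕ) : ContDiffOn ℝ ∞ (eulerOp k f) s :=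
  (contDiffOn_id.smul (hf.deriv_of_isOpen hs (by simp))).sub (hf.const_smul _)

theorem eulerOp_neg {f : ℝ → E} {s : Set ℝ} (hs : IsOpen s) (hodd : ∀ x ∈ s, f (-x) = -f x)
    (k : ℕ) : ∀ x ∈ s, eulerOp k f (-x) = -eulerOp k f x := by
  intro x hx
  simp only [eulerOp, deriv_neg_eq_of_odd hs hodd hx, hodd x hx, neg_smul, smul_neg, neg_sub',
    sub_neg_eq_add]

theorem iteratedDeriv_eulerOp {f : ℝ → E} {s : Set ℝ} (hs : IsOpen s) (hf : ContDiffOn ℝ ∞ f s)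
    (k j : ℕ) : EqOn (iteratedDeriv j (eulerOp k f))
      (fun x => x • iteratedDeriv (j + 1) f x + ((j : ℝ) - k) • iteratedDeriv j f x) s := by
  induction j with
  | zero =>
    intro x _
    simp [eulerOp, sub_eq_add_neg]
  | succ j ih =>
    intro x hx
    have hd := fun i => (hf.differentiableOn_iteratedDeriv_of_isOpen hs i x hx).differentiableAt
      (hs.mem_nhds hx)
    rw [iteratedDeriv_succ, (eventuallyEq_of_mem (hs.mem_nhds hx) ih).deriv_eq]
    refine (((hasDerivAt_id x).smul (hd (j + 1)).hasDerivAt).add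
      ((hd j).hasDerivAt.const_smul ((j : ℝ) - k))).deriv.trans ?_
    simp only [← iteratedDeriv_succ, id, one_smul]
    push_cast
    module

theorem iteratedDeriv_eulerOp_eq_zero {f : ℝ → E} {s : Set ℝ} (hs : IsOpen s) (h0 : (0 : ℝ) ∈ s)
    (hf : ContDiffOn ℝ ∞ f s) (hodd : ∀ x ∈ s, f (-x) = -f x) {k : ℕ} (hk : Odd k)
    (hvan : ∀ j < k, iteratedDeriv j f 0 = 0) :
    ∀ j < k + 2, iteratedDeriv j (eulerOp k f) 0 = 0 := by
  intro j hj
  have h := iteratedDeriv_eulerOp hs hf k j h0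
  simp only [zero_smul, zero_add] at h
  rw [h]
  rcases lt_trichotomy j k with hjk | rfl | hjk
  · rw [hvan j hjk, smul_zero]
  · rw [sub_self, zero_smul]
  · have hj : Even j := by
      obtain rfl : j = k + 1 := by omega
      exact hk.add_one
    rw [iteratedDeriv_eq_zero_of_odd (eventuallyEq_of_mem (hs.mem_nhds h0) hodd) hj, smul_zero]

def sqrtQuot (k : ℕ) (f : ℝ → E) (t : ℝ) : E :=
  if t = 0 then (k ! : ℝ)⁻¹ • iteratedDeriv k f 0 else (√t ^ k)⁻¹ • f √t

theorem sqrtQuot_of_ne_zero (k : ℕ) (f : ℝ → E) {t : ℝ} (ht : t ≠ 0) :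
    sqrtQuot k f t = (√t ^ k)⁻¹ • f √t :=
  if_neg ht

theorem hasDerivAt_sqrtQuot {k : ℕ} {f : ℝ → E} {t : ℝ} (ht : 0 < t)
    (hf : DifferentiableAt ℝ f √t) :
    HasDerivAt (sqrtQuot k f) ((2 : ℝ)⁻¹ • sqrtQuot (k + 2) (eulerOp k f) t) t := by
  have hs : √t ≠ 0 := (Real.sqrt_pos.2 ht).ne'
  have hsqrt := Real.hasDerivAt_sqrt ht.ne'
  -- `k - 1` is truncated subtraction; the factor `k` makes the case `k = 0` harmless.
  have hpow : (k : ℝ) * √t ^ (k - 1) * √t = k * √t ^ k := by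
    cases k <;> simp [pow_succ, mul_assoc]
  have h := ((hsqrt.pow k).inv (pow_ne_zero k hs)).smul (hf.hasDerivAt.scomp t hsqrt)
  refine (h.congr_of_eventuallyEq ?_).congr_deriv ?_
  · filter_upwards [lt_mem_nhds ht] with u hu
    exact sqrtQuot_of_ne_zero k f hu.ne'
  · simp only [Pi.pow_apply, Pi.inv_apply, Function.comp_apply]
    rw [sqrtQuot_of_ne_zero _ _ ht.ne', eulerOp]
    match_scalars
    · field_simp
      ring
    · field_simp
      linear_combination (-√t ^ (k + 1)) * hpow

theorem continuousWithinAt_sqrtQuot_zero {k : ℕ} {f : ℝ → E} (hf : ContDiffAt ℝ k f 0)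
    (hvan : ∀ j < k, iteratedDeriv j f 0 = 0) :
    ContinuousWithinAt (sqrtQuot k f) (Ici 0) 0 := by
  have hsqrt : Tendsto Real.sqrt (𝓝[>] 0) (𝓝[≠] 0) :=
    tendsto_nhdsWithin_iff.2 ⟨(Real.continuous_sqrt.tendsto' 0 0 Real.sqrt_zero).mono_left
      nhdsWithin_le_nhds, eventually_nhdsWithin_of_forall fun t ht => (Real.sqrt_pos.2 ht).ne'⟩
  rw [← continuousWithinAt_Ioi_iff_Ici, ContinuousWithinAt, sqrtQuot, if_pos rfl]
  refine ((tendsto_inv_pow_smul_of_iteratedDeriv_eq_zero hf hvan).comp hsqrt).congr' ?_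
  filter_upwards [self_mem_nhdsWithin] with t ht
  simp [sqrtQuot_of_ne_zero k f (ne_of_gt ht)]

section UnitInterval

variable {k : ℕ} {f : ℝ → E}

theorem hasDerivAt_sqrtQuot_of_mem_Ioo (hf : ContDiffOn ℝ ∞ f (Ioo (-1) 1)) {t : ℝ}
    (ht : t ∈ Ioo 0 1) :
    HasDerivAt (sqrtQuot k f) ((2 : ℝ)⁻¹ • sqrtQuot (k + 2) (eulerOp k f) t) t := by
  have hsqrt : √t ∈ Ioo (-1) 1 :=
    ⟨by linarith [Real.sqrt_nonneg t], (Real.sqrt_lt' one_pos).2 (by nlinarith [ht.2])⟩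
  exact hasDerivAt_sqrtQuot ht.1
    ((hf.differentiableOn (by simp)).differentiableAt (isOpen_Ioo.mem_nhds hsqrt))

theorem continuousWithinAt_sqrtQuot_zero_of_contDiffOn (hf : ContDiffOn ℝ ∞ f (Ioo (-1) 1))
    (hvan : ∀ j < k, iteratedDeriv j f 0 = 0) :
    ContinuousWithinAt (sqrtQuot k f) (Ici 0) 0 :=
  continuousWithinAt_sqrtQuot_zero
    ((hf.contDiffAt (Ioo_mem_nhds (by norm_num) one_pos)).of_le (mod_cast le_top)) hvan

theorem continuousOn_sqrtQuot (hf : ContDiffOn ℝ ∞ f (Ioo (-1) 1))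
    (hvan : ∀ j < k, iteratedDeriv j f 0 = 0) :
    ContinuousOn (sqrtQuot k f) (Ico 0 1) := by
  rintro t ⟨ht0, ht1⟩
  rcases ht0.eq_or_lt with rfl | ht0
  · exact (continuousWithinAt_sqrtQuot_zero_of_contDiffOn hf hvan).mono Ico_subset_Ici_self
  · exact (hasDerivAt_sqrtQuot_of_mem_Ioo hf ⟨ht0, ht1⟩).continuousAt.continuousWithinAt

theorem hasDerivWithinAt_sqrtQuot (hk : Odd k) (hf : ContDiffOn ℝ ∞ f (Ioo (-1) 1))
    (hodd : ∀ x ∈ Ioo (-1) 1, f (-x) = -f x) (hvan : ∀ j < k, iteratedDeriv j f 0 = 0) :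
    ∀ t ∈ Ico (0 : ℝ) 1, HasDerivWithinAt (sqrtQuot k f)
      ((2 : ℝ)⁻¹ • sqrtQuot (k + 2) (eulerOp k f) t) (Ico 0 1) t := by
  intro t ht
  rcases ht.1.eq_or_lt with rfl | ht0
  · have hderiv : EqOn (deriv (sqrtQuot k f))
        (fun t => (2 : ℝ)⁻¹ • sqrtQuot (k + 2) (eulerOp k f) t) (Ioo 0 1) := fun t ht =>
      (hasDerivAt_sqrtQuot_of_mem_Ioo hf ht).deriv
    have hcont := continuousWithinAt_sqrtQuot_zero_of_contDiffOn
      (contDiffOn_eulerOp isOpen_Ioo hf k)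
      (iteratedDeriv_eulerOp_eq_zero isOpen_Ioo (by norm_num) hf hodd hk hvan)
    refine (hasDerivWithinAt_Ici_of_tendsto_deriv
      (fun t ht => (hasDerivAt_sqrtQuot_of_mem_Ioo hf ht).differentiableAt.differentiableWithinAt)
      ((continuousWithinAt_sqrtQuot_zero_of_contDiffOn hf hvan).mono
        (Ioo_subset_Ico_self.trans Ico_subset_Ici_self))
      (Ioo_mem_nhdsGT one_pos) ?_).mono Ico_subset_Ici_self
    refine ((hcont.mono Ioi_subset_Ici_self).tendsto.const_smul (2 : ℝ)⁻¹).congr' ?_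
    filter_upwards [Ioo_mem_nhdsGT one_pos] with t ht
    exact (hderiv ht).symm
  · exact (hasDerivAt_sqrtQuot_of_mem_Ioo hf ⟨ht0, ht.2⟩).hasDerivWithinAt

theorem contDiffOn_sqrtQuot (n : ℕ) (hk : Odd k) (hf : ContDiffOn ℝ ∞ f (Ioo (-1) 1))
    (hodd : ∀ x ∈ Ioo (-1) 1, f (-x) = -f x) (hvan : ∀ j < k, iteratedDeriv j f 0 = 0) :
    ContDiffOn ℝ n (sqrtQuot k f) (Ico 0 1) := by
  induction n generalizing k f with
  | zero => exact contDiffOn_zero.2 (continuousOn_sqrtQuot hf hvan)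
  | succ n ih =>
    have hderiv := hasDerivWithinAt_sqrtQuot hk hf hodd hvan
    rw [Nat.cast_succ, contDiffOn_succ_iff_derivWithin (uniqueDiffOn_Ico 0 1)]
    refine ⟨fun t ht => (hderiv t ht).differentiableWithinAt, by simp, ?_⟩
    refine ((ih (hk.add_even even_two) (contDiffOn_eulerOp isOpen_Ioo hf k)
      (eulerOp_neg isOpen_Ioo hodd k)
      (iteratedDeriv_eulerOp_eq_zero isOpen_Ioo (by norm_num) hf hodd hk hvan)).const_smul
      (2 : ℝ)⁻¹).congr fun t ht => ?_
    exact (hderiv t ht).derivWithin (uniqueDiffOn_Ico 0 1 t ht)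

end UnitInterval

end

/-- An odd `C^∞` function `g : (-1,1) → ℂ` factors as `g(x) = x·u(x²)` with
`u : [0,1) → ℂ` smooth (Whitney's theorem on even functions). -/
theorem odd_smooth_factorization (g : ℝ → ℂ)
    (hg : ContDiffOn ℝ (⊤ : ℕ∞) g (Set.Ioo (-1 : ℝ) 1))
    (hodd : ∀ x ∈ Set.Ioo (-1 : ℝ) 1, g (-x) = -g x) :
    ∃ u : ℝ → ℂ, ContDiffOn ℝ (⊤ : ℕ∞) u (Set.Ico (0 : ℝ) 1) ∧
      ∀ x ∈ Set.Ioo (-1 : ℝ) 1, g x = (x : ℂ) * u (x ^ 2) := by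
  have hg0 : g 0 = 0 := by
    simpa using iteratedDeriv_eq_zero_of_odd (eventuallyEq_of_mem
      (Ioo_mem_nhds (by norm_num) one_pos) hodd) (j := 0) ⟨0, rfl⟩
  refine ⟨sqrtQuot 1 g, contDiffOn_infty.2 fun n => contDiffOn_sqrtQuot n odd_one hg hodd
    (by simpa using hg0), fun x hx => ?_⟩
  rcases eq_or_ne x 0 with rfl | hx0
  · simp [hg0]
  rw [sqrtQuot_of_ne_zero _ _ (pow_ne_zero 2 hx0), Real.sqrt_sq_eq_abs, pow_one,
    Complex.real_smul]
  have hxC : (x : ℂ) ≠ 0 := by exact_mod_cast hx0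
  rcases hx0.lt_or_gt with hneg | hpos
  · rw [abs_of_neg hneg, hodd x hx]
    push_cast
    field_simp
  · rw [abs_of_pos hpos]
    push_cast
    field_simp
end
end

section
/- If f is a bisymplectomorphism of Δ, then there exists c ∈ ℂ with |c| = 1 such that the Fréchet derivative of f at 0 is the map u ↦ c·u; in particular Df(0) is ℂ-linear and is a linear automorphism of Δ. -/
open Complex Set

noncomputable section

/-- The open unit disc in `ℂ`. -/
def unitDisc : Set ℂ := {z : ℂ | ‖z‖ < 1}

/-- The flat symplectic form `ω₀(u,v) = Im (conj u * v)` on `ℂ`. -/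
def omega0 (u v : ℂ) : ℝ := ((starRingEnd ℂ) u * v).im

/-- The hyperbolic symplectic form `ω₋(z)(u,v) = Im (conj u * v) / (1 - |z|²)²` on the disc. -/
def omegaMinus (z u v : ℂ) : ℝ := ((starRingEnd ℂ) u * v).im / (1 - ‖z‖ ^ 2) ^ 2

/-- `f` is a smooth diffeomorphism of `s` onto `t`: it is `C^∞` on `s`, maps `s` to `t`,
and has a `C^∞` inverse mapping `t` to `s`. -/
def IsSmoothDiffeoOn {E F : Type*} [NormedAddCommGroup E] [NormedSpace ℝ E]
    [NormedAddCommGroup F] [NormedSpace ℝ F] (f : E → F) (s : Set E) (t : Set F) : Prop :=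
  ContDiffOn ℝ (⊤ : ℕ∞) f s ∧ Set.MapsTo f s t ∧
    ∃ g : F → E, ContDiffOn ℝ (⊤ : ℕ∞) g t ∧ Set.MapsTo g t s ∧ Set.InvOn g f s t

/-! Since `ω₋ = ω₀ / (1 - |z|²)²` and `f` preserves both forms, the conformal factors at `z`
and `f z` agree, so `|f z| = |z|`. Hence `f 0 = 0` and `Df(0)`, the limit of `t • f (t⁻¹ • u)`,
preserves norms; a real-linear isometry of `ℂ` preserving `ω₀` is a rotation. -/

open Filter Topology

theorem HasFDerivAt.norm_map_eq_of_eventually_norm_eq {E F : Type*}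
    [NormedAddCommGroup E] [NormedSpace ℝ E] [NormedAddCommGroup F] [NormedSpace ℝ F]
    {f : E → F} {L : E →L[ℝ] F} (hf : HasFDerivAt f L 0) (hf0 : f 0 = 0)
    (hnorm : ∀ᶠ x in 𝓝 0, ‖f x‖ = ‖x‖) (v : E) : ‖L v‖ = ‖v‖ := by
  have hlim : Tendsto (fun c : ℝ => ‖c • f (c⁻¹ • v)‖) atTop (𝓝 ‖L v‖) := by
    simpa [hf0] using (hf.lim_real v).norm
  have hsmall : Tendsto (fun c : ℝ => c⁻¹ • v) atTop (𝓝 0) := by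
    simpa using (tendsto_inv_atTop_zero (𝕜 := ℝ)).smul_const v
  refine tendsto_nhds_unique (hlim.congr' ?_) tendsto_const_nhds
  filter_upwards [hsmall.eventually hnorm, eventually_gt_atTop 0] with c hc hpos
  rw [norm_smul, hc, norm_smul, ← mul_assoc, ← norm_mul, mul_inv_cancel₀ hpos.ne', norm_one,
    one_mul]

lemma omegaMinus_eq (z u v : ℂ) : omegaMinus z u v = omega0 u v / (1 - ‖z‖ ^ 2) ^ 2 := rfl

lemma norm_eq_of_omega0_eq_of_omegaMinus_eq {z w a b u v : ℂ} (hz : z ∈ unitDisc)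
    (hw : w ∈ unitDisc) (h0 : omega0 a b = omega0 u v) (hne : omega0 u v ≠ 0)
    (hm : omegaMinus w a b = omegaMinus z u v) : ‖w‖ = ‖z‖ := by
  have hz' : ‖z‖ ^ 2 < 1 := by simpa using pow_lt_one₀ (norm_nonneg z) hz two_ne_zero
  have hw' : ‖w‖ ^ 2 < 1 := by simpa using pow_lt_one₀ (norm_nonneg w) hw two_ne_zero
  rw [omegaMinus_eq, omegaMinus_eq, h0, div_eq_mul_inv, div_eq_mul_inv, mul_right_inj' hne,
    inv_inj, pow_left_inj₀ (by linarith) (by linarith) two_ne_zero] at hm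
  exact (pow_left_inj₀ (norm_nonneg _) (norm_nonneg _) two_ne_zero).mp (by linarith)

lemma eq_mul_I_of_omega0_eq_one {c d : ℂ} (hc : ‖c‖ = 1) (hd : ‖d‖ = 1) (h : omega0 c d = 1) :
    d = c * I := by
  rw [← sq_eq_sq₀ (norm_nonneg _) zero_le_one, Complex.sq_norm, Complex.normSq_apply, one_pow]
    at hc hd
  simp only [omega0, mul_im, conj_re, conj_im] at h
  have hsq : (d.re + c.im) ^ 2 + (d.im - c.re) ^ 2 = 0 := by nlinarith
  refine Complex.ext ?_ ?_ <;> simp only [mul_re, mul_im, I_re, I_im] <;>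
    nlinarith [sq_nonneg (d.re + c.im), sq_nonneg (d.im - c.re)]

lemma ContinuousLinearMap.apply_eq_mul_of_norm_map_of_omega0 (L : ℂ →L[ℝ] ℂ)
    (hL : ∀ u, ‖L u‖ = ‖u‖) (h : omega0 (L 1) (L I) = 1) (u : ℂ) : L u = L 1 * u := by
  have hI : L I = L 1 * I :=
    eq_mul_I_of_omega0_eq_one (by simpa using hL 1) (by simpa using hL I) h
  calc L u = u.re • L 1 + u.im • L I := by
        rw [← map_smul, ← map_smul, ← map_add, real_smul, real_smul, mul_one, re_add_im]
    _ = L 1 * u := by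
        rw [hI, real_smul, real_smul]; linear_combination L 1 * re_add_im u

lemma isOpen_unitDisc : IsOpen unitDisc := isOpen_lt continuous_norm continuous_const

lemma zero_mem_unitDisc : (0 : ℂ) ∈ unitDisc := by simp [unitDisc]

/-- The derivative at the origin of a bisymplectomorphism of the unit disc is
multiplication by a unimodular constant; in particular it is `ℂ`-linear and a linear
automorphism of the disc. -/
theorem deriv_at_zero_of_bisymplectomorphism (f : ℂ → ℂ)
    (hf : IsSmoothDiffeoOn f unitDisc unitDisc)
    (h0 : ∀ z ∈ unitDisc, ∀ u v : ℂ,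
      omega0 (fderiv ℝ f z u) (fderiv ℝ f z v) = omega0 u v)
    (hm : ∀ z ∈ unitDisc, ∀ u v : ℂ,
      omegaMinus (f z) (fderiv ℝ f z u) (fderiv ℝ f z v) = omegaMinus z u v) :
    ∃ c : ℂ, ‖c‖ = 1 ∧ ∀ u : ℂ, fderiv ℝ f 0 u = c * u := by
  have hω : omega0 1 I = 1 := by simp [omega0]
  have hnorm : ∀ z ∈ unitDisc, ‖f z‖ = ‖z‖ := fun z hz =>
    norm_eq_of_omega0_eq_of_omegaMinus_eq hz (hf.2.1 hz) (h0 z hz 1 I)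
      (by simp [hω]) (hm z hz 1 I)
  have hf0 : f 0 = 0 := norm_eq_zero.mp (by simpa using hnorm 0 zero_mem_unitDisc)
  have hdiff : HasFDerivAt f (fderiv ℝ f 0) 0 :=
    ((hf.1.contDiffAt (isOpen_unitDisc.mem_nhds zero_mem_unitDisc)).differentiableAt
      (by simp)).hasFDerivAt
  have hisom : ∀ u, ‖fderiv ℝ f 0 u‖ = ‖u‖ :=
    hdiff.norm_map_eq_of_eventually_norm_eq hf0
      (eventually_of_mem (isOpen_unitDisc.mem_nhds zero_mem_unitDisc) hnorm)
  exact ⟨fderiv ℝ f 0 1, by simpa using hisom 1,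
    (fderiv ℝ f 0).apply_eq_mul_of_norm_map_of_omega0 hisom (by rw [h0 0 zero_mem_unitDisc, hω])⟩
end
end

section
/- The duality map F : Δ → ℂ, F(z) = z/√(1 − |z|²), satisfies F*ω₀ = ω₋; that is, for all z ∈ Δ and all u, v ∈ ℂ, ω₀(DF(z)u, DF(z)v) = ω₋(z)(u,v). -/
open Complex Set

noncomputable section

/-- The duality map `F(z) = z / √(1 - |z|²)` of the unit disc. -/
def dualityMap (z : ℂ) : ℂ := z / (Real.sqrt (1 - ‖z‖ ^ 2) : ℂ)

/-! Write `F = φ • id` with `φ z = (1 - |z|²)^(-1/2)`, so that `DF(z) u = φ u + φ³ ⟪z, u⟫ z`.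
The radial parts of `DF(z) u` and `DF(z) v` are parallel, and the mixed terms add up to
`φ⁴ (⟪z, u⟫ ω₀(z, v) - ⟪z, v⟫ ω₀(z, u)) = φ⁴ |z|² ω₀(u, v)` by a planar identity. Hence
`F*ω₀ = (φ² + φ⁴ |z|²) ω₀ = φ⁴ ω₀`, and `φ⁴ = (1 - |z|²)⁻²`. -/

section InnerProductSpace

variable {E : Type*} [NormedAddCommGroup E] [InnerProductSpace ℝ E] {z : E}

theorem hasFDerivAt_inv_sqrt_one_sub_norm_sq (hz : ‖z‖ < 1) :
    HasFDerivAt (fun w : E => (√(1 - ‖w‖ ^ 2))⁻¹)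
      ((√(1 - ‖z‖ ^ 2))⁻¹ ^ 3 • innerSL ℝ z) z := by
  have hpos : 0 < 1 - ‖z‖ ^ 2 := by nlinarith [norm_nonneg z]
  have hsqrt : 0 < √(1 - ‖z‖ ^ 2) := Real.sqrt_pos.2 hpos
  refine ((hasDerivAt_inv hsqrt.ne').comp_hasFDerivAt z
    (((hasFDerivAt_id z).norm_sq.const_sub 1).sqrt hpos.ne')).congr_fderiv ?_
  ext u
  simp only [ContinuousLinearMap.comp_id, smul_neg, neg_smul, neg_neg, smul_apply,
    coe_innerSL_apply, nsmul_eq_mul, Nat.cast_ofNat, smul_eq_mul, id_eq]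
  field_simp

theorem hasFDerivAt_inv_sqrt_one_sub_norm_sq_smul (hz : ‖z‖ < 1) :
    HasFDerivAt (fun w : E => (√(1 - ‖w‖ ^ 2))⁻¹ • w)
      ((√(1 - ‖z‖ ^ 2))⁻¹ • ContinuousLinearMap.id ℝ E +
        ((√(1 - ‖z‖ ^ 2))⁻¹ ^ 3 • innerSL ℝ z).smulRight z) z :=
  (hasFDerivAt_inv_sqrt_one_sub_norm_sq hz).smul (hasFDerivAt_id z)

end InnerProductSpace

theorem dualityMap_eq_smul : dualityMap = fun w => (√(1 - ‖w‖ ^ 2))⁻¹ • w := by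
  funext w
  rw [dualityMap, Complex.real_smul, div_eq_inv_mul, Complex.ofReal_inv]

theorem fderiv_dualityMap_apply {z : ℂ} (hz : ‖z‖ < 1) (u : ℂ) :
    fderiv ℝ dualityMap z u =
      (√(1 - ‖z‖ ^ 2))⁻¹ • u + ((√(1 - ‖z‖ ^ 2))⁻¹ ^ 3 * inner ℝ z u) • z := by
  rw [dualityMap_eq_smul, (hasFDerivAt_inv_sqrt_one_sub_norm_sq_smul hz).fderiv]
  rfl

theorem omega0_smul_add_inner_smul (a c : ℝ) (z u v : ℂ) :
    omega0 (a • u + (c * inner ℝ z u) • z) (a • v + (c * inner ℝ z v) • z) =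
      (a ^ 2 + a * c * ‖z‖ ^ 2) * omega0 u v := by
  simp only [omega0, Complex.inner, Complex.sq_norm, Complex.normSq_apply, Complex.mul_im,
    Complex.mul_re, Complex.add_re, Complex.add_im, Complex.real_smul, Complex.conj_re,
    Complex.conj_im, Complex.ofReal_re, Complex.ofReal_im, map_add, map_mul,
    Complex.conj_ofReal]
  ring

/-- The duality map pulls the flat symplectic form back to the hyperbolic form:
`F*ω₀ = ω₋`. -/
theorem dualityMap_pullback_flat_eq_hyperbolic :
    ∀ z ∈ unitDisc, ∀ u v : ℂ,
      omega0 (fderiv ℝ dualityMap z u) (fderiv ℝ dualityMap z v) = omegaMinus z u v := by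
  intro z hz u v
  have hpos : 0 < 1 - ‖z‖ ^ 2 := by nlinarith [norm_nonneg z, show ‖z‖ < 1 from hz]
  have hsq : √(1 - ‖z‖ ^ 2) ^ 2 = 1 - ‖z‖ ^ 2 := Real.sq_sqrt hpos.le
  have hscale :
      (√(1 - ‖z‖ ^ 2))⁻¹ ^ 2 + (√(1 - ‖z‖ ^ 2))⁻¹ * (√(1 - ‖z‖ ^ 2))⁻¹ ^ 3 * ‖z‖ ^ 2 =
        ((1 - ‖z‖ ^ 2) ^ 2)⁻¹ := by
    field_simp
    rw [show √(1 - ‖z‖ ^ 2) ^ 4 = (√(1 - ‖z‖ ^ 2) ^ 2) ^ 2 by ring, hsq]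
    ring
  rw [fderiv_dualityMap_apply hz, fderiv_dualityMap_apply hz, omega0_smul_add_inner_smul,
    hscale, omegaMinus, omega0, inv_mul_eq_div]
end
end
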